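/- Claim 1 (explicit cone isomorphism at a vertex): the K-linear map α : Cone(−r_{R,1}) → (E, D) defined by α(b_{pq}^+) = (−1)^{s(p,q)} (e_q ⊗ e_p^*) for 1 ≤ p ≤ q ≤ r and α(c_{pq}^+[1]) = (−1)^{s(p,q)} (e_q ⊗ e_p^*) for 1 ≤ q < p ≤ r, where s(p,q) = μ(p)(μ(q)+1)+1, is an isomorphism of cochain complexes: it is a degree-preserving K-linear bijection satisfying α ∘ δ = D ∘ α (and both δ and D square to zero). -/

import Mathlib

/-!
Setup for a vertex of type `(0,r)`: `K` a field, `r ≥ 1`, `μ : Fin r → ℤ` the Maslov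
potential on the right half-edges.  `C = ⊕ₚ K·eₚ` with `deg eₚ = -μ p`; linear maps
`C → C` are encoded as matrices with `f q p` the coefficient of `e q` in `f (e p)`.
Elements of the graded vector spaces `Hom_R = ⊕_{p ≤ q} K·b_{pq}⁺` and
`Hom_v[1] = ⊕_{q < p} K·c_{pq}⁺[1]` (both with `|·| = μ p - μ q`) are encoded by their
coefficient functions `β`, `γ`, supported on `p ≤ q` resp. `q < p`.
-/

namespace AugSheaf

variable {K : Type*} [Field K] {r : ℕ}

/-- The restriction to the non-wrapping vertex generators of an augmentation of the
internal DGA of the vertex: `x p q = εᵢ (v_{p,q-p})` for `p < q`, vanishing elsewhere,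
supported in degree `0`, and satisfying `∑_{p<c<q} x p c * x c q = 0`. -/
def IsVertexAug (μ : Fin r → ℤ) (x : Fin r → Fin r → K) : Prop :=
  (∀ p q : Fin r, ¬ p < q → x p q = 0) ∧
  (∀ p q : Fin r, x p q ≠ 0 → μ p = μ q + 1) ∧
  (∀ p q : Fin r, p < q → ∑ c ∈ Finset.Ioo p q, x p c * x c q = 0)

/-- The differential `dᵢ = ∑_{p<q} (-1)^(μ p) xᵢ p q (e_q ⊗ eₚ^*)`. -/
def vDiff (μ : Fin r → ℤ) (x : Fin r → Fin r → K) : Matrix (Fin r) (Fin r) K :=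
  fun q p => if p < q then (-1 : K) ^ (μ p) * x p q else 0

/-- The differential `m_{1,R}` on `Hom_R`, determined on generators (for `A ≤ B`) by
`m_{1,R} b_{AB}⁺ = -∑_{c<A} x₁ c A • b_{cB}⁺ + (-1)^(μ A - μ B) ∑_{B<d} x₂ B d • b_{Ad}⁺`. -/
def m1R (μ : Fin r → ℤ) (x₁ x₂ β : Fin r → Fin r → K) : Fin r → Fin r → K :=
  fun P Q =>
    -(∑ A ∈ Finset.Ioi P, x₁ P A * β A Q) +
      ∑ B ∈ Finset.Iio Q, (-1 : K) ^ (μ P - μ B) * x₂ B Q * β P B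

/-- The differential `m₁` on `Hom_v`, determined on generators (for `B < A`) by
`m₁ c_{AB}⁺ = ∑_{B<p<A} x₁ p A • c_{pB}⁺ + (-1)^(μ A - μ B + 1) ∑_{B<q<A} x₂ B q • c_{Aq}⁺`. -/
def m1V (μ : Fin r → ℤ) (x₁ x₂ γ : Fin r → Fin r → K) : Fin r → Fin r → K :=
  fun P Q =>
    if Q < P then
      (∑ A ∈ Finset.Ioi P, x₁ P A * γ A Q) +
        ∑ B ∈ Finset.Iio Q, (-1 : K) ^ (μ P - μ B + 1) * x₂ B Q * γ P B
    else 0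

/-- The map `r_{R,1} : Hom_v → Hom_R`, determined on generators (for `B < A`) by
`r_{R,1} c_{AB}⁺ = ∑_{p≤B} x₁ p A • b_{pB}⁺ + (-1)^(μ A - μ B + 1) ∑_{q≥A} x₂ B q • b_{Aq}⁺`. -/
def rR1 (μ : Fin r → ℤ) (x₁ x₂ γ : Fin r → Fin r → K) : Fin r → Fin r → K :=
  fun P Q =>
    if P ≤ Q then
      (∑ A ∈ Finset.Ioi Q, x₁ P A * γ A Q) +
        ∑ B ∈ Finset.Iio P, (-1 : K) ^ (μ P - μ B + 1) * x₂ B Q * γ P B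
    else 0

/-- The map `α : Cone(-r_{R,1}) → E = End(C)`, sending `b_{pq}⁺ ↦ (-1)^(s p q) (e_q ⊗ eₚ^*)`
(`p ≤ q`) and `c_{pq}⁺[1] ↦ (-1)^(s p q) (e_q ⊗ eₚ^*)` (`q < p`), where
`s p q = μ p (μ q + 1) + 1`.  A cone element is a pair `(β, γ)` of coefficient functions. -/
def alphaM (μ : Fin r → ℤ) (β γ : Fin r → Fin r → K) : Matrix (Fin r) (Fin r) K :=
  fun q p => (-1 : K) ^ (μ p * (μ q + 1) + 1) * (if p ≤ q then β p q else γ p q)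

/-!
Identify `Cone(-r_{R,1})` with all coefficient matrices `v` (the `b⁺`-part on and above the
diagonal, the `c⁺[1]`-part strictly below it) via `glue`. Under this identification the cone
differential becomes the single formula `m_{1,R}`, which in matrix form is
`v ↦ -X₁ v + S v S X₂` with `S = diag((-1)^μ)`, and `r_{R,1}`, `m₁` are minus its parts on and
below the diagonal. It squares to zero because `X_i² = 0` and, the `x_i` having degree `1`,
`S X_i = -X_i S`. Finally `α` transposes `v` and multiplies its entries by the Koszul signs
`(-1)^{s(p,q)}`, which are exactly the signs turning this formula into
`D f = d₂ f - (-1)^{|f|} f d₁` on homogeneous `v`.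
-/

open Finset Matrix

section Signs

variable {R : Type*} [DivisionRing R]

lemma neg_one_zpow_eq_of_even_sub {a b : ℤ} (h : Even (a - b)) :
    (-1 : R) ^ a = (-1 : R) ^ b := by
  rw [← sub_add_cancel a b, zpow_add₀ (neg_ne_zero.2 one_ne_zero), h.neg_one_zpow, one_mul]

lemma neg_one_zpow_add_one (n : ℤ) : (-1 : R) ^ (n + 1) = -(-1 : R) ^ n := by
  rw [zpow_add_one₀ (neg_ne_zero.2 one_ne_zero), mul_neg_one]

lemma neg_one_zpow_sub (a b : ℤ) : (-1 : R) ^ (a - b) = (-1 : R) ^ a * (-1 : R) ^ b := by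
  rw [← zpow_add₀ (neg_ne_zero.2 one_ne_zero)]
  exact neg_one_zpow_eq_of_even_sub ⟨-b, by ring⟩

lemma neg_one_zpow_mul_self (n : ℤ) : (-1 : R) ^ n * (-1 : R) ^ n = 1 := by
  rw [← zpow_add₀ (neg_ne_zero.2 one_ne_zero)]
  exact Even.neg_one_zpow ⟨n, rfl⟩

end Signs

section SquareZero

variable {A : Type*} [Ring A]

lemma mul_self_eq_zero_of_anticomm {s a : A} (hs : s * s = 1) (ha : s * a = -(a * s))
    (ha₂ : a * a = 0) : (s * a) * (s * a) = 0 := by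
  calc (s * a) * (s * a) = s * a * s * a := by noncomm_ring
    _ = -(a * (s * s) * a) := by rw [ha]; noncomm_ring
    _ = 0 := by rw [hs, mul_one, ha₂, neg_zero]

lemma neg_mul_add_mul_mul_mul_twice_eq_zero {s a b : A} (hs : s * s = 1)
    (ha : s * a = -(a * s)) (hb : s * b = -(b * s)) (ha₂ : a * a = 0) (hb₂ : b * b = 0)
    (v : A) :
    -(a * (-(a * v) + s * v * s * b)) + s * (-(a * v) + s * v * s * b) * s * b = 0 := by
  calc _ = a * a * v - (s * a + a * s) * v * s * b + s * s * v * (s * b * (s * b)) := by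
          noncomm_ring
    _ = 0 := by rw [ha, neg_add_cancel, ha₂, mul_self_eq_zero_of_anticomm hs hb hb₂]; noncomm_ring

lemma mul_sub_smul_mul_twice_eq_zero {R : Type*} [CommRing R] [Module R A]
    [IsScalarTower R A A] [SMulCommClass R A A] {d₁ d₂ : A} (h₁ : d₁ * d₁ = 0)
    (h₂ : d₂ * d₂ = 0) {ε : R} (hε : ε * ε = 1) (f : A) :
    d₂ * (d₂ * f - ε • (f * d₁)) - (-ε) • ((d₂ * f - ε • (f * d₁)) * d₁) = 0 := by
  simp only [mul_sub, sub_mul, mul_smul_comm, smul_mul_assoc, smul_sub, smul_smul, neg_mul,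
    hε, neg_smul, one_smul, ← mul_assoc, h₂, mul_assoc f d₁ d₁, h₁]
  simp

end SquareZero

variable {μ : Fin r → ℤ}

def signDiag (μ : Fin r → ℤ) : Matrix (Fin r) (Fin r) K := diagonal fun p => (-1 : K) ^ μ p

lemma signDiag_mul_self : signDiag μ * signDiag μ = (1 : Matrix (Fin r) (Fin r) K) := by
  rw [signDiag, diagonal_mul_diagonal, ← diagonal_one]
  exact congrArg diagonal (funext fun p => neg_one_zpow_mul_self (μ p))

section StrictlyUpper

variable {x x₁ x₂ : Fin r → Fin r → K}

lemma vDiff_apply (hx : ∀ p q, ¬ p < q → x p q = 0) (q p : Fin r) :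
    vDiff μ x q p = (-1 : K) ^ μ p * x p q := by
  by_cases hpq : p < q
  · simp [vDiff, hpq]
  · simp [vDiff, hpq, hx p q hpq]

lemma vDiff_eq (hx : ∀ p q, ¬ p < q → x p q = 0) :
    vDiff μ x = (signDiag μ * of x)ᵀ := by
  ext q p
  simp [vDiff_apply hx, signDiag]

lemma m1R_apply (h₁ : ∀ p q, ¬ p < q → x₁ p q = 0) (h₂ : ∀ p q, ¬ p < q → x₂ p q = 0)
    (v : Fin r → Fin r → K) (P Q : Fin r) :
    m1R μ x₁ x₂ v P Q =
      -∑ A, x₁ P A * v A Q + ∑ B, (-1 : K) ^ (μ P - μ B) * x₂ B Q * v P B := by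
  rw [m1R, sum_subset (subset_univ (Ioi P)), sum_subset (subset_univ (Iio Q))]
  · exact fun B _ hB => by rw [h₂ B Q (by simpa using hB), mul_zero, zero_mul]
  · exact fun A _ hA => by rw [h₁ P A (by simpa using hA), zero_mul]

lemma m1R_eq (h₁ : ∀ p q, ¬ p < q → x₁ p q = 0) (h₂ : ∀ p q, ¬ p < q → x₂ p q = 0)
    (v : Fin r → Fin r → K) :
    of (m1R μ x₁ x₂ v) = -(of x₁ * of v) + signDiag μ * of v * signDiag μ * of x₂ := by
  ext P Q
  rw [of_apply, m1R_apply h₁ h₂, Matrix.add_apply, Matrix.neg_apply, mul_apply, mul_apply]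
  simp only [signDiag, diagonal_mul, mul_diagonal, of_apply, neg_one_zpow_sub]
  congr 1
  exact sum_congr rfl fun _ _ => by ring

end StrictlyUpper

namespace IsVertexAug

variable {x : Fin r → Fin r → K} (hx : IsVertexAug μ x)
include hx

lemma sum_mul_eq_zero (p q : Fin r) : ∑ c, x p c * x c q = 0 := by
  rw [← sum_subset (subset_univ (Ioo p q)) fun c _ hc => ?_]
  · by_cases hpq : p < q
    · exact hx.2.2 p q hpq
    · rw [Ioo_eq_empty hpq, sum_empty]
  · rcases not_and_or.1 (mem_Ioo.not.1 hc) with h | h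
    · rw [hx.1 p c h, zero_mul]
    · rw [hx.1 c q h, mul_zero]

lemma of_mul_self : of x * of x = 0 := by
  ext p q
  simp [mul_apply, hx.sum_mul_eq_zero]

lemma signDiag_mul_of : signDiag μ * of x = -(of x * signDiag μ) := by
  ext p q
  simp only [signDiag, diagonal_mul, Matrix.neg_apply, mul_diagonal, of_apply]
  by_cases h : x p q = 0
  · simp [h]
  · rw [hx.2.1 p q h, neg_one_zpow_add_one]
    ring

lemma vDiff_mul_self : vDiff μ x * vDiff μ x = 0 := by
  rw [vDiff_eq hx.1, ← transpose_mul,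
    mul_self_eq_zero_of_anticomm signDiag_mul_self hx.signDiag_mul_of hx.of_mul_self,
    transpose_zero]

end IsVertexAug

lemma m1R_m1R {x₁ x₂ : Fin r → Fin r → K} (hx₁ : IsVertexAug μ x₁) (hx₂ : IsVertexAug μ x₂)
    (v : Fin r → Fin r → K) : m1R μ x₁ x₂ (m1R μ x₁ x₂ v) = 0 := by
  apply of.injective
  rw [m1R_eq hx₁.1 hx₂.1, m1R_eq hx₁.1 hx₂.1, of_zero]
  exact neg_mul_add_mul_mul_mul_twice_eq_zero signDiag_mul_self hx₁.signDiag_mul_of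
    hx₂.signDiag_mul_of hx₁.of_mul_self hx₂.of_mul_self v

lemma m1R_add (x₁ x₂ β γ : Fin r → Fin r → K) :
    m1R μ x₁ x₂ (β + γ) = m1R μ x₁ x₂ β + m1R μ x₁ x₂ γ := by
  ext P Q
  simp only [m1R, Pi.add_apply, mul_add, sum_add_distrib]
  ring

lemma m1V_eq (x₁ x₂ γ : Fin r → Fin r → K) :
    m1V μ x₁ x₂ γ = fun P Q => if Q < P then -m1R μ x₁ x₂ γ P Q else 0 := by
  ext P Q
  simp only [m1V, m1R, neg_add, neg_neg, neg_one_zpow_add_one, neg_mul, ← sum_neg_distrib]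

section Cone

def IsUpper (β : Fin r → Fin r → K) : Prop := ∀ p q, ¬ p ≤ q → β p q = 0

def IsStrictLower (γ : Fin r → Fin r → K) : Prop := ∀ p q, ¬ q < p → γ p q = 0

def glue (β γ : Fin r → Fin r → K) : Fin r → Fin r → K :=
  fun p q => if p ≤ q then β p q else γ p q

variable {x₁ x₂ β γ : Fin r → Fin r → K}

lemma glue_eq_add (hβ : IsUpper β) (hγ : IsStrictLower γ) : glue β γ = β + γ := by
  ext p q
  by_cases h : p ≤ q
  · simp [glue, h, hγ p q (not_lt.2 h)]
  · simp [glue, h, hβ p q h]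

lemma isUpper_m1R (hβ : IsUpper β) : IsUpper (m1R μ x₁ x₂ β) := by
  intro P Q hPQ
  have hA : ∀ A ∈ Ioi P, x₁ P A * β A Q = 0 := fun A hA => by
    rw [hβ A Q fun h => hPQ ((mem_Ioi.1 hA).le.trans h), mul_zero]
  have hB : ∀ B ∈ Iio Q, (-1 : K) ^ (μ P - μ B) * x₂ B Q * β P B = 0 := fun B hB => by
    rw [hβ P B (not_le.2 ((mem_Iio.1 hB).trans (not_le.1 hPQ))), mul_zero]
  simp [m1R, sum_eq_zero hA, sum_eq_zero hB]

lemma rR1_eq (h₁ : ∀ p q, ¬ p < q → x₁ p q = 0) (h₂ : ∀ p q, ¬ p < q → x₂ p q = 0)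
    (hγ : IsStrictLower γ) :
    rR1 μ x₁ x₂ γ = fun P Q => if P ≤ Q then -m1R μ x₁ x₂ γ P Q else 0 := by
  ext P Q
  simp only [rR1]
  split_ifs
  · rw [m1R_apply h₁ h₂, sum_subset (subset_univ (Ioi Q)), sum_subset (subset_univ (Iio P))]
    · simp only [neg_add, neg_neg, neg_one_zpow_add_one, neg_mul, ← sum_neg_distrib]
    · exact fun B _ hB => by rw [hγ P B (by simpa using hB), mul_zero]
    · exact fun A _ hA => by rw [hγ A Q (by simpa using hA), mul_zero]
  · rfl

lemma glue_coneDiff (h₁ : ∀ p q, ¬ p < q → x₁ p q = 0) (h₂ : ∀ p q, ¬ p < q → x₂ p q = 0)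
    (hβ : IsUpper β) (hγ : IsStrictLower γ) :
    glue (m1R μ x₁ x₂ β - rR1 μ x₁ x₂ γ) (-m1V μ x₁ x₂ γ) = m1R μ x₁ x₂ (glue β γ) := by
  rw [glue_eq_add hβ hγ, m1R_add, rR1_eq h₁ h₂ hγ, m1V_eq]
  ext P Q
  by_cases h : P ≤ Q
  · simp [glue, h]
  · simp [glue, h, not_le.1 h, isUpper_m1R hβ P Q h]

lemma isUpper_m1R_sub_rR1 (hβ : IsUpper β) : IsUpper (m1R μ x₁ x₂ β - rR1 μ x₁ x₂ γ) :=
  fun P Q h => by simp [isUpper_m1R hβ P Q h, rR1, h]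

lemma isStrictLower_neg_m1V : IsStrictLower (-m1V μ x₁ x₂ γ) :=
  fun P Q h => by simp [m1V, h]

lemma eq_of_glue_eq {β' γ' : Fin r → Fin r → K} (hβ : IsUpper β) (hγ : IsStrictLower γ)
    (hβ' : IsUpper β') (hγ' : IsStrictLower γ') (h : glue β γ = glue β' γ') :
    β = β' ∧ γ = γ' := by
  constructor <;> ext p q <;> have := congrFun (congrFun h p) q
  · by_cases hpq : p ≤ q
    · simpa [glue, hpq] using this
    · rw [hβ p q hpq, hβ' p q hpq]
  · by_cases hqp : q < p
    · simpa [glue, not_le.2 hqp] using this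
    · rw [hγ p q hqp, hγ' p q hqp]

lemma coneDiff_sq_eq_zero (hx₁ : IsVertexAug μ x₁) (hx₂ : IsVertexAug μ x₂)
    (hβ : IsUpper β) (hγ : IsStrictLower γ) :
    m1R μ x₁ x₂ (m1R μ x₁ x₂ β - rR1 μ x₁ x₂ γ) - rR1 μ x₁ x₂ (-m1V μ x₁ x₂ γ) = 0 ∧
      -m1V μ x₁ x₂ (-m1V μ x₁ x₂ γ) = 0 := by
  have hδβ : IsUpper (m1R μ x₁ x₂ β - rR1 μ x₁ x₂ γ) := isUpper_m1R_sub_rR1 hβ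
  refine eq_of_glue_eq (isUpper_m1R_sub_rR1 hδβ) isStrictLower_neg_m1V (fun _ _ _ => rfl)
    (fun _ _ _ => rfl) ?_
  rw [glue_coneDiff hx₁.1 hx₂.1 hδβ isStrictLower_neg_m1V, glue_coneDiff hx₁.1 hx₂.1 hβ hγ,
    m1R_m1R hx₁ hx₂]
  ext p q
  simp [glue]

end Cone

def twist (μ : Fin r → ℤ) (v : Fin r → Fin r → K) : Matrix (Fin r) (Fin r) K :=
  fun q p => (-1 : K) ^ (μ p * (μ q + 1) + 1) * v p q

lemma alphaM_eq_twist_glue (β γ : Fin r → Fin r → K) :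
    alphaM μ β γ = twist μ (glue β γ) := rfl

lemma twist_bijective : Function.Bijective (twist (K := K) μ) := by
  refine Function.bijective_iff_has_inverse.2
    ⟨fun M p q => (-1 : K) ^ (μ p * (μ q + 1) + 1) * M q p, fun v => ?_, fun M => ?_⟩ <;>
  ext <;> simp [twist, ← mul_assoc, neg_one_zpow_mul_self]

lemma glue_bijective :
    Function.Bijective fun bc : {bc : (Fin r → Fin r → K) × (Fin r → Fin r → K) //
      IsUpper bc.1 ∧ IsStrictLower bc.2} => glue bc.1.1 bc.1.2 := by
  refine ⟨fun ⟨⟨β, γ⟩, hβ, hγ⟩ ⟨⟨β', γ'⟩, hβ', hγ'⟩ h => ?_, fun v => ?_⟩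
  · obtain ⟨rfl, rfl⟩ := eq_of_glue_eq hβ hγ hβ' hγ' h
    rfl
  · refine ⟨⟨⟨fun p q => if p ≤ q then v p q else 0, fun p q => if p ≤ q then 0 else v p q⟩,
      fun p q h => if_neg h, fun p q h => if_pos (not_lt.1 h)⟩, ?_⟩
    ext p q
    by_cases h : p ≤ q <;> simp [glue, h]

lemma alphaM_add (β β' γ γ' : Fin r → Fin r → K) :
    alphaM μ (β + β') (γ + γ') = alphaM μ β γ + alphaM μ β' γ' := by
  ext q p
  by_cases h : p ≤ q <;> simp [alphaM, h, mul_add]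

lemma alphaM_smul (c : K) (β γ : Fin r → Fin r → K) :
    alphaM μ (c • β) (c • γ) = c • alphaM μ β γ := by
  ext q p
  by_cases h : p ≤ q <;> simp [alphaM, h, mul_left_comm]

def HasDegree (μ : Fin r → ℤ) (k : ℤ) (v : Fin r → Fin r → K) : Prop :=
  ∀ p q, v p q ≠ 0 → μ p - μ q = k

lemma HasDegree.glue {k : ℤ} {β γ : Fin r → Fin r → K} (hβ : HasDegree μ k β)
    (hγ : HasDegree μ k γ) : HasDegree μ k (glue β γ) := by
  intro p q h
  by_cases hpq : p ≤ q
  · exact hβ p q (by simpa [AugSheaf.glue, hpq] using h)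
  · exact hγ p q (by simpa [AugSheaf.glue, hpq] using h)

lemma HasDegree.twist {k : ℤ} {v : Fin r → Fin r → K} (hv : HasDegree μ k v) (q p : Fin r)
    (h : twist μ v q p ≠ 0) : μ p - μ q = k :=
  hv p q (right_ne_zero_of_mul h)

lemma twist_m1R {x₁ x₂ : Fin r → Fin r → K} (hx₁ : IsVertexAug μ x₁) (hx₂ : IsVertexAug μ x₂)
    {k : ℤ} {v : Fin r → Fin r → K} (hv : HasDegree μ k v) :
    twist μ (m1R μ x₁ x₂ v) = vDiff μ x₂ * twist μ v - (-1 : K) ^ k • (twist μ v * vDiff μ x₁) := by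
  have h₀ : (-1 : K) ≠ 0 := neg_ne_zero.2 one_ne_zero
  ext Q P
  simp only [twist, m1R_apply hx₁.1 hx₂.1, Matrix.sub_apply, Matrix.smul_apply, mul_apply,
    vDiff_apply hx₁.1, vDiff_apply hx₂.1, smul_eq_mul, neg_add_eq_sub]
  rw [mul_sub, mul_sum, mul_sum, mul_sum]
  congr 1 <;> refine sum_congr rfl fun c _ => ?_
  · by_cases h : x₂ c Q = 0
    · simp [h]
    rw [hx₂.2.1 c Q h]
    have hs : (-1 : K) ^ (μ P * (μ Q + 1) + 1) * (-1 : K) ^ (μ P - (μ Q + 1)) =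
        (-1 : K) ^ (μ Q + 1) * (-1 : K) ^ (μ P * (μ Q + 1 + 1) + 1) := by
      rw [← zpow_add₀ h₀, ← zpow_add₀ h₀]
      exact neg_one_zpow_eq_of_even_sub ⟨-μ Q - 1, by ring⟩
    linear_combination (x₂ c Q * v P c) * hs
  · by_cases h : x₁ P c * v c Q = 0
    · rcases mul_eq_zero.1 h with h | h <;> simp [h]
    rw [hx₁.2.1 P c (left_ne_zero_of_mul h), ← hv c Q (right_ne_zero_of_mul h)]
    have hs : (-1 : K) ^ ((μ c + 1) * (μ Q + 1) + 1) =
        (-1 : K) ^ (μ c - μ Q) * (-1 : K) ^ (μ c * (μ Q + 1) + 1) * (-1 : K) ^ (μ c + 1) := by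
      rw [← zpow_add₀ h₀, ← zpow_add₀ h₀]
      exact neg_one_zpow_eq_of_even_sub ⟨μ Q - μ c, by ring⟩
    linear_combination (x₁ P c * v c Q) * hs

theorem cone_iso_at_vertex_general (μ : Fin r → ℤ)
    (x₁ x₂ : Fin r → Fin r → K) (hx₁ : IsVertexAug μ x₁) (hx₂ : IsVertexAug μ x₂) :
    -- `α` is a bijection from the cone onto `End(C)`
    Function.Bijective
      (fun bc : {bc : (Fin r → Fin r → K) × (Fin r → Fin r → K) //
          (∀ p q : Fin r, ¬ p ≤ q → bc.1 p q = 0) ∧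
          (∀ p q : Fin r, ¬ q < p → bc.2 p q = 0)} =>
        alphaM μ bc.1.1 bc.1.2) ∧
    -- `α` is `K`-linear
    (∀ β β' γ γ' : Fin r → Fin r → K,
      alphaM μ (β + β') (γ + γ') = alphaM μ β γ + alphaM μ β' γ') ∧
    (∀ (c : K) (β γ : Fin r → Fin r → K), alphaM μ (c • β) (c • γ) = c • alphaM μ β γ) ∧
    -- `α` is degree preserving
    (∀ (k : ℤ) (β γ : Fin r → Fin r → K),
      (∀ p q : Fin r, β p q ≠ 0 → μ p - μ q = k) →
      (∀ p q : Fin r, γ p q ≠ 0 → μ p - μ q = k) →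
      ∀ q p : Fin r, alphaM μ β γ q p ≠ 0 → μ p - μ q = k) ∧
    -- `α ∘ δ = D ∘ α` on homogeneous cone elements of degree `k`
    (∀ (k : ℤ) (β γ : Fin r → Fin r → K),
      (∀ p q : Fin r, ¬ p ≤ q → β p q = 0) → (∀ p q : Fin r, ¬ q < p → γ p q = 0) →
      (∀ p q : Fin r, β p q ≠ 0 → μ p - μ q = k) →
      (∀ p q : Fin r, γ p q ≠ 0 → μ p - μ q = k) →
      alphaM μ (m1R μ x₁ x₂ β - rR1 μ x₁ x₂ γ) (-(m1V μ x₁ x₂ γ)) =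
        vDiff μ x₂ * alphaM μ β γ - ((-1 : K) ^ k) • (alphaM μ β γ * vDiff μ x₁)) ∧
    -- `δ ∘ δ = 0`
    (∀ β γ : Fin r → Fin r → K,
      (∀ p q : Fin r, ¬ p ≤ q → β p q = 0) → (∀ p q : Fin r, ¬ q < p → γ p q = 0) →
      m1R μ x₁ x₂ (m1R μ x₁ x₂ β - rR1 μ x₁ x₂ γ) - rR1 μ x₁ x₂ (-(m1V μ x₁ x₂ γ)) = 0 ∧
        -(m1V μ x₁ x₂ (-(m1V μ x₁ x₂ γ))) = 0) ∧
    -- `D ∘ D = 0` on homogeneous endomorphisms of degree `k`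
    (∀ (k : ℤ) (f : Matrix (Fin r) (Fin r) K),
      (∀ q p : Fin r, f q p ≠ 0 → μ p - μ q = k) →
      vDiff μ x₂ * (vDiff μ x₂ * f - ((-1 : K) ^ k) • (f * vDiff μ x₁)) -
        ((-1 : K) ^ (k + 1)) •
          ((vDiff μ x₂ * f - ((-1 : K) ^ k) • (f * vDiff μ x₁)) * vDiff μ x₁) = 0) := by
  refine ⟨(twist_bijective (μ := μ)).comp glue_bijective, alphaM_add, alphaM_smul,
    fun k β γ hβ hγ => (HasDegree.glue hβ hγ).twist, fun k β γ hβs hγs hβ hγ => ?_,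
    fun β γ hβ hγ => coneDiff_sq_eq_zero hx₁ hx₂ hβ hγ, fun k f _ => ?_⟩
  · rw [alphaM_eq_twist_glue, glue_coneDiff hx₁.1 hx₂.1 hβs hγs]
    exact twist_m1R hx₁ hx₂ (HasDegree.glue hβ hγ)
  · rw [neg_one_zpow_add_one]
    exact mul_sub_smul_mul_twice_eq_zero hx₁.vDiff_mul_self hx₂.vDiff_mul_self
      (neg_one_zpow_mul_self k) f

/-- **Claim 1 (explicit cone isomorphism at a vertex)**: `α : Cone(-r_{R,1}) → (E, D)` is an
isomorphism of cochain complexes: a degree-preserving `K`-linear bijection intertwining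
the cone differential `δ (β,γ) = (m_{1,R} β - r_{R,1} γ, -(m₁ γ))` with
`D f = d₂ ∘ f - (-1)^{|f|} f ∘ d₁`; moreover both `δ` and `D` square to zero. -/
theorem cone_iso_at_vertex (hr : 1 ≤ r) (μ : Fin r → ℤ)
    (x₁ x₂ : Fin r → Fin r → K) (hx₁ : IsVertexAug μ x₁) (hx₂ : IsVertexAug μ x₂) :
    -- `α` is a bijection from the cone onto `End(C)`
    Function.Bijective
      (fun bc : {bc : (Fin r → Fin r → K) × (Fin r → Fin r → K) //
          (∀ p q : Fin r, ¬ p ≤ q → bc.1 p q = 0) ∧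
          (∀ p q : Fin r, ¬ q < p → bc.2 p q = 0)} =>
        alphaM μ bc.1.1 bc.1.2) ∧
    -- `α` is `K`-linear
    (∀ β β' γ γ' : Fin r → Fin r → K,
      alphaM μ (β + β') (γ + γ') = alphaM μ β γ + alphaM μ β' γ') ∧
    (∀ (c : K) (β γ : Fin r → Fin r → K), alphaM μ (c • β) (c • γ) = c • alphaM μ β γ) ∧
    -- `α` is degree preserving
    (∀ (k : ℤ) (β γ : Fin r → Fin r → K),
      (∀ p q : Fin r, β p q ≠ 0 → μ p - μ q = k) →
      (∀ p q : Fin r, γ p q ≠ 0 → μ p - μ q = k) →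
      ∀ q p : Fin r, alphaM μ β γ q p ≠ 0 → μ p - μ q = k) ∧
    -- `α ∘ δ = D ∘ α` on homogeneous cone elements of degree `k`
    (∀ (k : ℤ) (β γ : Fin r → Fin r → K),
      (∀ p q : Fin r, ¬ p ≤ q → β p q = 0) → (∀ p q : Fin r, ¬ q < p → γ p q = 0) →
      (∀ p q : Fin r, β p q ≠ 0 → μ p - μ q = k) →
      (∀ p q : Fin r, γ p q ≠ 0 → μ p - μ q = k) →
      alphaM μ (m1R μ x₁ x₂ β - rR1 μ x₁ x₂ γ) (-(m1V μ x₁ x₂ γ)) =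
        vDiff μ x₂ * alphaM μ β γ - ((-1 : K) ^ k) • (alphaM μ β γ * vDiff μ x₁)) ∧
    -- `δ ∘ δ = 0`
    (∀ β γ : Fin r → Fin r → K,
      (∀ p q : Fin r, ¬ p ≤ q → β p q = 0) → (∀ p q : Fin r, ¬ q < p → γ p q = 0) →
      m1R μ x₁ x₂ (m1R μ x₁ x₂ β - rR1 μ x₁ x₂ γ) - rR1 μ x₁ x₂ (-(m1V μ x₁ x₂ γ)) = 0 ∧
        -(m1V μ x₁ x₂ (-(m1V μ x₁ x₂ γ))) = 0) ∧
    -- `D ∘ D = 0` on homogeneous endomorphisms of degree `k`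
    (∀ (k : ℤ) (f : Matrix (Fin r) (Fin r) K),
      (∀ q p : Fin r, f q p ≠ 0 → μ p - μ q = k) →
      vDiff μ x₂ * (vDiff μ x₂ * f - ((-1 : K) ^ k) • (f * vDiff μ x₁)) -
        ((-1 : K) ^ (k + 1)) •
          ((vDiff μ x₂ * f - ((-1 : K) ^ k) • (f * vDiff μ x₁)) * vDiff μ x₁) = 0) :=
  cone_iso_at_vertex_general μ x₁ x₂ hx₁ hx₂

end AugSheaf
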